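/- Let σ be a non-decreasing sigmoidal function whose kernel φ_σ(x) = (σ(x+1) − σ(x−1))/2 is positive, even, and nonincreasing on [0,∞). Then for every δ ∈ (0,1), the condition that max{φ_σ(nt−k): t ∈ [0,1]\(k/n−δ, k/n+δ)} / min{φ_σ(nt−k): t ∈ (k/n, k/n+δ²)} → 0 as n → ∞ (uniformly in k ∈ {0,…,n}) holds if and only if lim_{n→∞} φ_σ(nδ)/φ_σ(nδ²) = 0 for all δ ∈ (0,1). -/

import Mathlib

/-! Since `φ_σ` is even and antitone on `[0, ∞)`, the maximum in `KernelRatio σ n k δ` is at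
most `φ_σ(nδ)` and the minimum at least `φ_σ(nδ²)`, whence the limit condition implies the
ratio condition. Conversely, take `k = 0`, radius `√δ` and scale `m = ⌊n √δ⌋₊`: then
`m √δ ≤ n δ` and `n δ² < m δ`, so the maximum is at least `φ_σ(nδ)` and the minimum, not
necessarily attained, is at most `φ_σ(nδ²)`; as `m → ∞` with `n`, the ratio
`φ_σ(nδ)/φ_σ(nδ²)` is eventually below any `ε`. -/

open MeasureTheory Set Filter Topology

noncomputable section

/-- Kernel associated with a sigmoidal function: `φ_σ(x) = (σ(x+1) − σ(x−1))/2`. -/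
def phiK (σ : ℝ → ℝ) (x : ℝ) : ℝ := (σ (x + 1) - σ (x - 1)) / 2

/-- `σ` is a (non-decreasing) sigmoidal function. -/
def Sigmoidal (σ : ℝ → ℝ) : Prop :=
  Monotone σ ∧ Tendsto σ atBot (nhds 0) ∧ Tendsto σ atTop (nhds 1)

/-- Strict positivity of a measure on `I = [0,1]`. -/
def StrictlyPositive (ρ : Measure ℝ) : Prop :=
  ∀ A : Set ℝ, IsOpen A → (A ∩ Icc (0:ℝ) 1).Nonempty → 0 < ρ (A ∩ Icc (0:ℝ) 1)

/-- `max{φ_σ(nt−k) : t ∈ [0,1] \ (k/n−δ, k/n+δ)} / min{φ_σ(nt−k) : t ∈ (k/n, k/n+δ²)}`. -/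
def KernelRatio (σ : ℝ → ℝ) (n k : ℕ) (δ : ℝ) : ℝ :=
  sSup ((fun t => phiK σ ((n : ℝ) * t - (k : ℝ))) ''
      (Icc (0:ℝ) 1 \ Ioo ((k : ℝ) / n - δ) ((k : ℝ) / n + δ))) /
    sInf ((fun t => phiK σ ((n : ℝ) * t - (k : ℝ))) ''
      (Ioo ((k : ℝ) / n) ((k : ℝ) / n + δ ^ 2)))

/-- For every `δ ∈ (0,1)`, the max/min kernel ratio tends to `0` as `n → ∞`,
uniformly in `k ∈ {0,…,n}`. -/
def RatioCond (σ : ℝ → ℝ) : Prop :=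
  ∀ δ ∈ Ioo (0:ℝ) 1, ∀ ε > (0:ℝ), ∃ N : ℕ, ∀ n ≥ N, ∀ k ≤ n, KernelRatio σ n k δ < ε

section EvenAntitone

variable {f : ℝ → ℝ}

theorem le_of_abs_le_of_even_of_antitoneOn (heven : ∀ x, f (-x) = f x)
    (hanti : AntitoneOn f (Ici 0)) {a x : ℝ} (ha : 0 ≤ a) (h : a ≤ |x|) : f x ≤ f a := by
  have hfx : f x = f |x| := by
    rcases abs_cases x with ⟨hx, _⟩ | ⟨hx, _⟩ <;> simp only [hx, heven]
  rw [hfx]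
  exact hanti ha (ha.trans h) h

theorem sSup_image_shift_diff_Ioo_le (hpos : ∀ x, 0 < f x) (heven : ∀ x, f (-x) = f x)
    (hanti : AntitoneOn f (Ici 0)) {n k δ : ℝ} (hn : 0 < n) (hδ : 0 < δ) (s : Set ℝ) :
    sSup ((fun t => f (n * t - k)) '' (s \ Ioo (k / n - δ) (k / n + δ))) ≤ f (n * δ) := by
  refine Real.sSup_le ?_ (hpos _).le
  rintro _ ⟨t, ⟨-, ht⟩, rfl⟩
  refine le_of_abs_le_of_even_of_antitoneOn heven hanti (by positivity) ?_
  have hkn : n * (k / n) = k := mul_div_cancel₀ _ hn.ne'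
  simp only [mem_Ioo, not_and_or, not_lt] at ht
  rw [le_abs]
  rcases ht with ht | ht
  · right; nlinarith
  · left; nlinarith

theorem le_sInf_image_shift_Ioo (hanti : AntitoneOn f (Ici 0)) {n k c : ℝ} (hn : 0 < n)
    (hc : 0 < c) :
    f (n * c) ≤ sInf ((fun t => f (n * t - k)) '' Ioo (k / n) (k / n + c)) := by
  refine le_csInf ((nonempty_Ioo.mpr (by linarith)).image _) ?_
  rintro _ ⟨t, ⟨ht₁, ht₂⟩, rfl⟩
  have hkn : n * (k / n) = k := mul_div_cancel₀ _ hn.ne'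
  exact hanti (show 0 ≤ n * t - k by nlinarith) (show 0 ≤ n * c by positivity) (by nlinarith)

end EvenAntitone

section KernelRatio

variable {σ : ℝ → ℝ}

theorem kernelRatio_le (hpos : ∀ x, 0 < phiK σ x) (heven : ∀ x, phiK σ (-x) = phiK σ x)
    (hdec : AntitoneOn (phiK σ) (Ici 0)) {n k : ℕ} {δ : ℝ} (hn : 0 < n) (hδ : 0 < δ) :
    KernelRatio σ n k δ ≤ phiK σ (n * δ) / phiK σ (n * δ ^ 2) := by
  have hn' : (0 : ℝ) < n := by exact_mod_cast hn
  exact div_le_div₀ (hpos _).le (sSup_image_shift_diff_Ioo_le hpos heven hdec hn' hδ _) (hpos _)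
    (le_sInf_image_shift_Ioo hdec hn' (by positivity))

theorem div_le_kernelRatio_zero (hpos : ∀ x, 0 < phiK σ x) (hdec : AntitoneOn (phiK σ) (Ici 0))
    {m : ℕ} {η b : ℝ} (hm : 0 < m) (hη₀ : 0 < η) (hη₁ : η ≤ 1) (hb₀ : 0 < b)
    (hb : b < m * η ^ 2) :
    phiK σ (m * η) / phiK σ b ≤ KernelRatio σ m 0 η := by
  have hm' : (0 : ℝ) < m := by exact_mod_cast hm
  unfold KernelRatio
  simp only [CharP.cast_eq_zero, zero_div, zero_sub, zero_add, sub_zero]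
  have hsup : phiK σ (m * η) ≤
      sSup ((fun t => phiK σ (m * t)) '' (Icc 0 1 \ Ioo (-η) η)) := by
    refine le_csSup ⟨phiK σ 0, ?_⟩ ⟨η, ⟨⟨hη₀.le, hη₁⟩, fun h => lt_irrefl _ h.2⟩, rfl⟩
    rintro _ ⟨t, ⟨⟨ht, -⟩, -⟩, rfl⟩
    exact hdec (show (0 : ℝ) ≤ 0 from le_rfl) (show 0 ≤ (m : ℝ) * t by positivity)
      (by positivity)
  have hinf : sInf ((fun t => phiK σ (m * t)) '' Ioo 0 (η ^ 2)) ≤ phiK σ b := by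
    refine csInf_le ⟨0, ?_⟩ ⟨b / m, ⟨by positivity, ?_⟩, ?_⟩
    · rintro _ ⟨t, -, rfl⟩
      exact (hpos _).le
    · rwa [div_lt_iff₀ hm', mul_comm]
    · simp only [mul_div_cancel₀ _ hm'.ne']
  have hinf₀ : 0 < sInf ((fun t => phiK σ (m * t)) '' Ioo 0 (η ^ 2)) := by
    have := le_sInf_image_shift_Ioo (k := 0) hdec hm' (pow_pos hη₀ 2)
    simp only [zero_div, zero_add, sub_zero] at this
    exact (hpos _).trans_le this
  exact div_le_div₀ ((hpos _).le.trans hsup) hsup hinf₀ hinf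

theorem ratioCond_of_tendsto (hpos : ∀ x, 0 < phiK σ x) (heven : ∀ x, phiK σ (-x) = phiK σ x)
    (hdec : AntitoneOn (phiK σ) (Ici 0))
    (h : ∀ δ ∈ Ioo (0 : ℝ) 1,
      Tendsto (fun n : ℕ => phiK σ (n * δ) / phiK σ (n * δ ^ 2)) atTop (𝓝 0)) :
    RatioCond σ := by
  intro δ hδ ε hε
  obtain ⟨N, hN⟩ := eventually_atTop.mp ((h δ hδ).eventually (gt_mem_nhds hε))
  refine ⟨max N 1, fun n hn k _ => ?_⟩
  exact (kernelRatio_le hpos heven hdec (lt_of_lt_of_le one_pos (le_of_max_le_right hn)) hδ.1)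
    |>.trans_lt (hN n (le_of_max_le_left hn))

theorem tendsto_of_ratioCond (hpos : ∀ x, 0 < phiK σ x) (hdec : AntitoneOn (phiK σ) (Ici 0))
    (hR : RatioCond σ) {δ : ℝ} (hδ : δ ∈ Ioo (0 : ℝ) 1) :
    Tendsto (fun n : ℕ => phiK σ (n * δ) / phiK σ (n * δ ^ 2)) atTop (𝓝 0) := by
  obtain ⟨hδ₀, hδ₁⟩ := hδ
  set η := √δ
  have hη₀ : 0 < η := Real.sqrt_pos.mpr hδ₀
  have hη₁ : η < 1 := (Real.sqrt_lt' one_pos).2 (by simpa using hδ₁)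
  have hηη : η ^ 2 = δ := Real.sq_sqrt hδ₀.le
  have hδη : δ < η := by nlinarith
  refine tendsto_order.2 ⟨fun a ha => Eventually.of_forall fun n =>
    ha.trans_le (div_nonneg (hpos _).le (hpos _).le), fun ε hε => ?_⟩
  obtain ⟨N, hN⟩ := hR η ⟨hη₀, hη₁⟩ ε hε
  have hlarge₁ : ∀ᶠ n : ℕ in atTop, (N : ℝ) ≤ n * δ :=
    (tendsto_natCast_atTop_atTop.atTop_mul_const hδ₀).eventually_ge_atTop _
  have hlarge₂ : ∀ᶠ n : ℕ in atTop, 1 ≤ n * (η - δ) :=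
    (tendsto_natCast_atTop_atTop.atTop_mul_const (sub_pos.2 hδη)).eventually_ge_atTop _
  filter_upwards [hlarge₁, hlarge₂] with n hnN hn
  set m := ⌊n * η⌋₊
  have hmη : (m : ℝ) * η ≤ n * δ := by
    have := Nat.floor_le (show 0 ≤ (n : ℝ) * η by positivity)
    nlinarith
  have hnm : n * δ < m := by
    have := Nat.lt_floor_add_one ((n : ℝ) * η)
    nlinarith
  have hn₀ : (0 : ℝ) < n := by nlinarith
  have hm₀ : (0 : ℝ) < m := by nlinarith
  calc phiK σ (n * δ) / phiK σ (n * δ ^ 2)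
      ≤ phiK σ (m * η) / phiK σ (n * δ ^ 2) :=
        div_le_div_of_nonneg_right (hdec (show 0 ≤ (m : ℝ) * η by positivity)
          (show 0 ≤ (n : ℝ) * δ by positivity) hmη) (hpos _).le
    _ ≤ KernelRatio σ m 0 η :=
        div_le_kernelRatio_zero hpos hdec (by exact_mod_cast hm₀) hη₀ hη₁.le (by positivity)
          (by rw [hηη]; nlinarith)
    _ < ε := hN m (by exact_mod_cast hnN.trans hnm.le) 0 m.zero_le

end KernelRatio

theorem statement19_general (σ : ℝ → ℝ)
    (hpos : ∀ x, 0 < phiK σ x)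
    (heven : ∀ x, phiK σ (-x) = phiK σ x)
    (hdec : AntitoneOn (phiK σ) (Ici (0:ℝ))) :
    RatioCond σ ↔
      ∀ δ ∈ Ioo (0:ℝ) 1,
        Tendsto (fun n : ℕ =>
          phiK σ ((n : ℝ) * δ) / phiK σ ((n : ℝ) * δ ^ 2)) atTop (nhds 0) :=
  ⟨fun hR _ => tendsto_of_ratioCond hpos hdec hR, ratioCond_of_tendsto hpos heven hdec⟩

/-- for a non-decreasing sigmoidal `σ` whose kernel `φ_σ` is positive, even,
and nonincreasing on `[0,∞)`, the uniform max/min kernel ratio condition (for every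
`δ ∈ (0,1)`) holds if and only if `φ_σ(nδ)/φ_σ(nδ²) → 0` as `n → ∞` for all `δ ∈ (0,1)`. -/
theorem statement19 (σ : ℝ → ℝ) (hσ : Sigmoidal σ)
    (hpos : ∀ x, 0 < phiK σ x)
    (heven : ∀ x, phiK σ (-x) = phiK σ x)
    (hdec : AntitoneOn (phiK σ) (Ici (0:ℝ))) :
    RatioCond σ ↔
      ∀ δ ∈ Ioo (0:ℝ) 1,
        Tendsto (fun n : ℕ =>
          phiK σ ((n : ℝ) * δ) / phiK σ ((n : ℝ) * δ ^ 2)) atTop (nhds 0) :=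
  statement19_general σ hpos heven hdec
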